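/- Let l, r ∈ ℕ, let F be a field whose characteristic is either 0 or an odd prime p with p > r, let V be an F-vector space, and let v₀, v₁, …, v_{2l} be linearly independent vectors of V. Set s = ι(v₀) + ι(v₁)ι(v₂) + ι(v₃)ι(v₄) + ⋯ + ι(v_{2l−1})ι(v_{2l}) ∈ Λ(V). Then s^r = 0 if and only if r ≥ l + 2. -/

import Mathlib

/-!
The elements `a = ι v₀` and `bᵢ = ι v_{2i+1} * ι v_{2i+2}` commute pairwise and square to zero,
so `s = a + B` with `B = ∑ bᵢ` can be computed in a commutative subalgebra. There
`(a + B) ^ (k + 1) = B ^ (k + 1) + (k + 1) • a B ^ k`, and `B ^ m` times the product of all but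
`m` of the `bᵢ` is `m! • ∏ bᵢ`, so `B ^ m = 0` for `m > l`. Hence `s ^ r = 0` once `r ≥ l + 2`,
while for `r ≤ l + 1` a suitable multiple of `s ^ r` is `r! • ι v₀ ι v₁ ⋯ ι v_{2l}`, which is
nonzero because `r!` is invertible in `F` and the `vᵢ` are linearly independent.
-/

open Finset
open scoped Nat

namespace Finset

variable {ι A : Type*} [CommSemiring A] {b : ι → A} {t : Finset ι}

theorem sum_mul_prod_of_mul_self_eq_zero [DecidableEq ι] {T : Finset ι} (hT : T ⊆ t)
    (hb : ∀ i ∈ T, b i * b i = 0) :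
    (∑ i ∈ t, b i) * ∏ i ∈ T, b i = ∑ j ∈ t \ T, ∏ i ∈ insert j T, b i := by
  rw [sum_mul, ← sum_sdiff hT, sum_eq_zero (s := T) fun j hj => ?_, add_zero]
  · exact sum_congr rfl fun j hj => (prod_insert (mem_sdiff.mp hj).2).symm
  · rw [← mul_prod_erase T b hj, ← mul_assoc, hb j hj, zero_mul]

theorem sum_mul_prod_self_of_mul_self_eq_zero (hb : ∀ i ∈ t, b i * b i = 0) :
    (∑ i ∈ t, b i) * ∏ i ∈ t, b i = 0 := by
  classical
  rw [sum_mul_prod_of_mul_self_eq_zero Subset.rfl hb, Finset.sdiff_self, sum_empty]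

theorem sum_pow_mul_prod_of_mul_self_eq_zero [DecidableEq ι] {T : Finset ι}
    (hb : ∀ i ∈ t, b i * b i = 0) (hT : T ⊆ t) :
    (∑ i ∈ t, b i) ^ #(t \ T) * ∏ i ∈ T, b i = (#(t \ T))! • ∏ i ∈ t, b i := by
  generalize hm : #(t \ T) = m
  induction m generalizing T with
  | zero =>
    rw [card_eq_zero, sdiff_eq_empty_iff_subset] at hm
    simp [hT.antisymm hm]
  | succ m ih =>
    have hstep : ∀ j ∈ t \ T,
        (∑ i ∈ t, b i) ^ m * ∏ i ∈ insert j T, b i = m ! • ∏ i ∈ t, b i := by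
      intro j hj
      refine ih (insert_subset (mem_sdiff.mp hj).1 hT) ?_
      rw [sdiff_insert, card_erase_of_mem hj, hm, add_tsub_cancel_right]
    rw [pow_succ, mul_assoc, sum_mul_prod_of_mul_self_eq_zero hT fun i hi => hb i (hT hi),
      mul_sum, sum_congr rfl hstep, sum_const, hm, smul_smul, Nat.factorial_succ]

theorem sum_pow_eq_zero_of_card_lt (hb : ∀ i ∈ t, b i * b i = 0) {m : ℕ} (hm : #t < m) :
    (∑ i ∈ t, b i) ^ m = 0 := by
  classical
  obtain ⟨k, rfl⟩ := Nat.exists_eq_add_of_lt hm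
  have htop := sum_pow_mul_prod_of_mul_self_eq_zero hb (empty_subset t)
  rw [sdiff_empty, prod_empty, mul_one] at htop
  rw [add_right_comm, pow_add, pow_succ', htop, mul_smul_comm,
    sum_mul_prod_self_of_mul_self_eq_zero hb, smul_zero, zero_mul]

end Finset

section SquareZero

variable {ι A : Type*} [CommSemiring A] {a : A} {b : ι → A} {t : Finset ι}

theorem add_pow_succ_of_mul_self_eq_zero (ha : a * a = 0) (x : A) (n : ℕ) :
    (a + x) ^ (n + 1) = x ^ (n + 1) + (n + 1) • (a * x ^ n) := by
  induction n with
  | zero => simp [add_comm]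
  | succ n ih =>
    calc (a + x) ^ (n + 1 + 1)
        = x ^ (n + 1 + 1) + (n + 1 + 1) • (a * x ^ (n + 1)) + (n + 1) • (x ^ n * (a * a)) := by
          rw [pow_succ, ih]; ring
      _ = x ^ (n + 1 + 1) + (n + 1 + 1) • (a * x ^ (n + 1)) := by
          rw [ha, mul_zero, smul_zero, add_zero]

theorem exists_add_sum_pow_mul_eq_factorial_smul (ha : a * a = 0)
    (hb : ∀ i ∈ t, b i * b i = 0) {r : ℕ} (hr : r ≤ #t + 1) :
    ∃ c, (a + ∑ i ∈ t, b i) ^ r * c = r ! • (a * ∏ i ∈ t, b i) := by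
  classical
  cases r with
  | zero => exact ⟨a * ∏ i ∈ t, b i, by simp⟩
  | succ k =>
    obtain ⟨U, hUt, hU⟩ := exists_subset_card_eq (show k ≤ #t by omega)
    have hprod := sum_pow_mul_prod_of_mul_self_eq_zero hb (sdiff_subset (s := t) (t := U))
    rw [Finset.sdiff_sdiff_eq_self hUt, hU] at hprod
    refine ⟨∏ i ∈ t \ U, b i, ?_⟩
    rw [add_pow_succ_of_mul_self_eq_zero ha, add_mul, pow_succ', mul_assoc, hprod, mul_smul_comm,
      sum_mul_prod_self_of_mul_self_eq_zero hb, smul_zero, zero_add, smul_mul_assoc, mul_assoc,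
      hprod, mul_smul_comm, smul_smul, Nat.factorial_succ]

theorem add_sum_pow_eq_zero_iff (ha : a * a = 0) (hb : ∀ i ∈ t, b i * b i = 0) {r : ℕ}
    (htop : r ! • (a * ∏ i ∈ t, b i) ≠ 0) : (a + ∑ i ∈ t, b i) ^ r = 0 ↔ #t + 2 ≤ r := by
  refine ⟨fun h => ?_, fun h => ?_⟩
  · by_contra hr
    obtain ⟨c, hc⟩ := exists_add_sum_pow_mul_eq_factorial_smul ha hb (r := r) (by omega)
    rw [h, zero_mul] at hc
    exact htop hc.symm
  · obtain ⟨k, rfl⟩ : ∃ k, r = k + 1 := ⟨r - 1, by omega⟩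
    rw [add_pow_succ_of_mul_self_eq_zero ha, sum_pow_eq_zero_of_card_lt hb (by omega),
      sum_pow_eq_zero_of_card_lt hb (by omega), mul_zero, smul_zero, add_zero]

end SquareZero

theorem List.prod_ofFn_two_mul_add_one {M : Type*} [Monoid M] (n : ℕ)
    (f : Fin (2 * n + 1) → M) :
    (List.ofFn f).prod
      = f 0 * (List.ofFn fun i : Fin n =>
          f ⟨2 * i + 1, by linarith [i.isLt]⟩ * f ⟨2 * i + 2, by linarith [i.isLt]⟩).prod := by
  induction n with
  | zero => simp
  | succ n ih =>
    rw [List.ofFn_congr (show 2 * (n + 1) + 1 = 2 * n + 1 + 2 by ring), List.ofFn_add,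
      List.prod_append, ih, List.ofFn_succ' (n := n), List.prod_concat]
    simp only [List.ofFn_succ, List.ofFn_zero, List.prod_cons, List.prod_nil, mul_one, mul_assoc]
    rfl

namespace ExteriorAlgebra

theorem ιMulti_ne_zero_of_linearIndependent {K E : Type*} [Field K] [AddCommGroup E]
    [Module K E] {n : ℕ} {v : Fin n → E} (hv : LinearIndependent K v) : ιMulti K n v ≠ 0 := by
  have := (exteriorPower.ιMulti_family_linearIndependent_field (n := n) hv).ne_zero
    (Set.powersetCard.ofFinEmbEquiv (OrderEmbedding.id _))
  rw [Ne, ← exteriorPower.ιMulti_apply_coe, ZeroMemClass.coe_eq_zero]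
  simpa [exteriorPower.ιMulti_family] using this

variable {R M : Type*} [CommRing R] [AddCommGroup M] [Module R M]

theorem ι_mul_ι_anticomm (x y : M) : ι R x * ι R y = -(ι R y * ι R x) :=
  eq_neg_of_add_eq_zero_left (ι_add_mul_swap x y)

theorem commute_ι_ι_mul_ι (x y z : M) : Commute (ι R x) (ι R y * ι R z) := by
  rw [Commute, SemiconjBy, ← mul_assoc, ι_mul_ι_anticomm x y, neg_mul, mul_assoc,
    ι_mul_ι_anticomm x z, mul_neg, neg_neg, mul_assoc]

theorem ι_mul_ι_mul_self (x y : M) : ι R x * ι R y * (ι R x * ι R y) = 0 := by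
  rw [mul_assoc, ← mul_assoc (ι R y), ι_mul_ι_anticomm y x, neg_mul, mul_neg, ← mul_assoc,
    ← mul_assoc, ι_sq_zero, zero_mul, zero_mul, neg_zero]

theorem ι_add_sum_ι_mul_ι_pow_eq_zero_iff {n : ℕ} (x : M) (y z : Fin n → M) {r : ℕ}
    (htop : r ! • (ι R x * (List.ofFn fun i => ι R (y i) * ι R (z i)).prod) ≠ 0) :
    (ι R x + ∑ i, ι R (y i) * ι R (z i)) ^ r = 0 ↔ n + 2 ≤ r := by
  set a := ι R x
  set b : Fin n → ExteriorAlgebra R M := fun i => ι R (y i) * ι R (z i)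
  have hcomm : ∀ u ∈ insert a (Set.range b), ∀ w ∈ insert a (Set.range b), u * w = w * u := by
    rintro _ (rfl | ⟨i, rfl⟩) _ (rfl | ⟨j, rfl⟩)
    exacts [rfl, (commute_ι_ι_mul_ι _ _ _).eq, (commute_ι_ι_mul_ι _ _ _).symm.eq,
      ((commute_ι_ι_mul_ι _ _ _).mul_left (commute_ι_ι_mul_ι _ _ _)).eq]
  let A := Algebra.adjoin R (insert a (Set.range b))
  have : IsMulCommutative A := Algebra.isMulCommutative_adjoin R hcomm
  let : CommRing A := open scoped IsMulCommutative in inferInstance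
  let a' : A := ⟨a, Algebra.subset_adjoin (Set.mem_insert _ _)⟩
  let b' (i : Fin n) : A := ⟨b i, Algebra.subset_adjoin (Set.mem_insert_of_mem _ ⟨i, rfl⟩)⟩
  have hsum : a + ∑ i, b i = A.val (a' + ∑ i, b' i) := by rw [map_add, map_sum]; rfl
  have hprod : a * (List.ofFn b).prod = A.val (a' * ∏ i, b' i) := by
    rw [map_mul, ← List.prod_ofFn, map_list_prod, List.map_ofFn]
    rfl
  rw [hsum, ← map_pow, map_eq_zero_iff _ Subtype.val_injective]
  refine (add_sum_pow_eq_zero_iff (Subtype.ext (ι_sq_zero _))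
    (fun i _ => Subtype.ext (ι_mul_ι_mul_self _ _)) fun h => htop ?_).trans
    (by rw [card_univ, Fintype.card_fin])
  rw [hprod, ← map_nsmul, h, map_zero]

end ExteriorAlgebra

/-- Let `F` have characteristic `0` or an odd prime characteristic `p > r`, and let
`v₀, …, v_{2l}` be linearly independent vectors. For
`s = ι(v₀) + ι(v₁)ι(v₂) + ⋯ + ι(v_{2l−1})ι(v_{2l})` in Λ(V) one has
`s ^ r = 0` if and only if `r ≥ l + 2`. -/
theorem grassmann_odd_sum_pow_eq_zero_iff
    (l r : ℕ) (F : Type*) [Field F]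
    (hchar : CharP F 0 ∨ ∃ p : ℕ, p.Prime ∧ p ≠ 2 ∧ CharP F p ∧ r < p)
    (V : Type*) [AddCommGroup V] [Module F V]
    (v : Fin (2 * l + 1) → V) (hv : LinearIndependent F v)
    (s : ExteriorAlgebra F V)
    (hs : s = ExteriorAlgebra.ι F (v 0)
        + ∑ i : Fin l,
            ExteriorAlgebra.ι F (v ⟨2 * (i : ℕ) + 1, by omega⟩)
              * ExteriorAlgebra.ι F (v ⟨2 * (i : ℕ) + 2, by omega⟩)) :
    s ^ r = 0 ↔ l + 2 ≤ r := by
  have hfac : (r ! : F) ≠ 0 := by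
    rcases hchar with hchar | ⟨p, hp, -, hchar, hrp⟩
    · rw [Ne, CharP.cast_eq_zero_iff F 0, zero_dvd_iff]
      exact r.factorial_ne_zero
    · rw [Ne, CharP.cast_eq_zero_iff F p, hp.dvd_factorial]
      omega
  have htop := smul_ne_zero hfac (ExteriorAlgebra.ιMulti_ne_zero_of_linearIndependent hv)
  rw [ExteriorAlgebra.ιMulti_apply, List.prod_ofFn_two_mul_add_one, Nat.cast_smul_eq_nsmul] at htop
  rw [hs]
  exact ExteriorAlgebra.ι_add_sum_ι_mul_ι_pow_eq_zero_iff _ _ _ htop
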